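/- Let ψ : S_n → S_n be linear with ψ(C_n) = C_n and suppose for every t there is b_t ∈ T_n with ψ(e_{tt}) = e_{tt} + b_t. Then ψ is the identity map on S_n. -/

import Mathlib

open Matrix

/-- A matrix is copositive if its quadratic form is nonnegative on the nonnegative orthant. -/
def Copositive {m : Type*} [Fintype m] (a : Matrix m m ℝ) : Prop :=
  ∀ u : m → ℝ, (∀ i, 0 ≤ u i) → 0 ≤ u ⬝ᵥ a *ᵥ u

/-- The submodule of symmetric n×n real matrices. -/
def Sn (n : ℕ) : Submodule ℝ (Matrix (Fin n) (Fin n) ℝ) where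
  carrier := {a | a.IsSymm}
  add_mem' := fun ha hb => ha.add hb
  zero_mem' := Matrix.isSymm_zero
  smul_mem' := fun c a ha => ha.smul c

/-- The copositive cone, as a subset of the symmetric matrices. -/
def Cn (n : ℕ) : Set (Sn n) := {a | Copositive a.1}

/-- The set A^t : symmetric matrices with (t,t) entry zero, all other entries positive. -/
def At (n : ℕ) (t : Fin n) : Set (Sn n) :=
  {a | a.1 t t = 0 ∧ ∀ i j, (i, j) ≠ (t, t) → 0 < a.1 i j}

/-- T_n : symmetric nonnegative matrices with zero diagonal. -/
def Tn (n : ℕ) : Set (Sn n) := {a | (∀ i j, 0 ≤ a.1 i j) ∧ ∀ i, a.1 i i = 0}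

/-- A monomial matrix: exactly one nonzero entry in each row and column. -/
def IsMonomial {n : ℕ} (m : Matrix (Fin n) (Fin n) ℝ) : Prop :=
  (∀ i, ∃! j, m i j ≠ 0) ∧ (∀ j, ∃! i, m i j ≠ 0)

/-!
The copositive cone spans `S_n`, so `ψ` is a linear automorphism of `S_n` and `ψ⁻¹` preserves
`C_n` as well. The ray through `e_tt` is extreme in `C_n`; pulling the decomposition
`ψ(e_tt) = e_tt + b_t` back along `ψ` shows that `ψ⁻¹(e_tt)` is a multiple of `e_tt`, and the
`(t,t)` entries give `ψ(e_tt) = e_tt`. For `i ≠ j`, `a² e_ii + b² e_jj + s (e_ij + e_ji)` is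
copositive iff `s ≥ -ab`. As `ψ` fixes `e_ii` and `e_jj`, the matrix `B = ψ(e_ij + e_ji)` obeys
the same criterion: letting `a` or `b` tend to `0`, the quadratic form of `B` vanishes on the
nonnegative vectors with `u_i = 0` or `u_j = 0`, so `B` is a multiple of `e_ij + e_ji`, and
`a = b = 1` pins the multiple down to `1`.
-/

lemma nonpos_of_forall_pos_le_mul {x y : ℝ} (hy : 0 ≤ y) (h : ∀ c : ℝ, 0 < c → x ≤ c * y) :
    x ≤ 0 := by
  by_contra! hx
  have := h (x / (y + 1)) (by positivity)
  rw [div_mul_eq_mul_div, le_div_iff₀ (by positivity)] at this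
  nlinarith

lemma eq_one_of_forall_neg_one_le_mul_iff {b : ℝ} (h : ∀ s : ℝ, -1 ≤ s * b ↔ -1 ≤ s) :
    b = 1 := by
  have hb1 : b ≤ 1 := by linarith [(h (-1)).2 le_rfl]
  have hb0 : 0 < b := by
    by_contra! hb
    linarith [(h (-2)).1 (by linarith)]
  have := (h (-b⁻¹)).1 (by rw [neg_mul, inv_mul_cancel₀ hb0.ne'])
  exact le_antisymm hb1 ((inv_le_one₀ hb0).1 (by linarith))

section Copositive

variable {m : Type*}

lemma single_add_single_nonneg [DecidableEq m] {k l : m} {a b : ℝ} (ha : 0 ≤ a) (hb : 0 ≤ b)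
    (x : m) : 0 ≤ (Pi.single k a + Pi.single l b : m → ℝ) x :=
  add_nonneg ((Pi.single_nonneg (α := fun _ => ℝ)).2 ha x)
    ((Pi.single_nonneg (α := fun _ => ℝ)).2 hb x)

variable [Fintype m]

lemma copositive_of_nonneg {A : Matrix m m ℝ} (hA : ∀ k l, 0 ≤ A k l) : Copositive A :=
  fun _ hu => Finset.sum_nonneg fun k _ =>
    mul_nonneg (hu k) (Finset.sum_nonneg fun l _ => mul_nonneg (hA k l) (hu l))

variable [DecidableEq m]

lemma single_dotProduct_mulVec_single (A : Matrix m m ℝ) (k l : m) (a b : ℝ) :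
    Pi.single k a ⬝ᵥ A *ᵥ Pi.single l b = a * A k l * b := by
  simp [mulVec_single, single_dotProduct]
  ring

lemma dotProduct_single_mulVec (u : m → ℝ) (i j : m) (c : ℝ) :
    u ⬝ᵥ single i j c *ᵥ u = c * (u i * u j) := by
  rw [single_mulVec, ← Pi.single.eq_def, dotProduct_single]
  ring

lemma dotProduct_smul_single_add_mulVec (A : Matrix m m ℝ) (u : m → ℝ) (i j : m) (a b s : ℝ) :
    u ⬝ᵥ (a • single i i 1 + b • single j j 1 + s • A) *ᵥ u
      = a * (u i * u i) + b * (u j * u j) + s * (u ⬝ᵥ A *ᵥ u) := by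
  simp only [add_mulVec, smul_mulVec, dotProduct_add, dotProduct_smul, dotProduct_single_mulVec,
    smul_eq_mul, one_mul]

namespace Copositive

variable {A P Q : Matrix m m ℝ}

lemma apply_self_nonneg (hA : Copositive A) (k : m) : 0 ≤ A k k := by
  simpa [single_dotProduct_mulVec_single] using hA (Pi.single k 1)
    fun x => (Pi.single_nonneg (α := fun _ => ℝ)).2 zero_le_one x

lemma apply_nonneg_of_apply_self_eq_zero (hA : Copositive A) (hAs : A.IsSymm) {k : m}
    (hk : A k k = 0) (l : m) : 0 ≤ A k l := by
  have hle : ∀ c : ℝ, 0 < c → -(2 * A k l) ≤ c * A l l := by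
    intro c hc
    have := hA (Pi.single k 1 + Pi.single l c) (single_add_single_nonneg zero_le_one hc.le)
    simp only [mulVec_add, dotProduct_add, add_dotProduct, single_dotProduct_mulVec_single,
      hk, hAs.apply k l] at this
    nlinarith
  linarith [nonpos_of_forall_pos_le_mul (hA.apply_self_nonneg l) hle]

lemma apply_eq_zero_of_add_eq_zero (hP : Copositive P) (hPs : P.IsSymm) (hQ : Copositive Q)
    (hQs : Q.IsSymm) {k l : m} (hkk : P k k + Q k k = 0) (hkl : P k l + Q k l = 0) :
    P k l = 0 := by
  obtain ⟨hPk, hQk⟩ := (add_eq_zero_iff_of_nonneg (hP.apply_self_nonneg k)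
    (hQ.apply_self_nonneg k)).1 hkk
  exact ((add_eq_zero_iff_of_nonneg (hP.apply_nonneg_of_apply_self_eq_zero hPs hPk l)
    (hQ.apply_nonneg_of_apply_self_eq_zero hQs hQk l)).1 hkl).1

lemma eq_smul_single_of_add_eq_single (hP : Copositive P) (hPs : P.IsSymm) (hQ : Copositive Q)
    (hQs : Q.IsSymm) {t : m} (h : P + Q = single t t 1) : P = P t t • single t t 1 := by
  have hent : ∀ k l, P k l + Q k l = single t t 1 k l := fun k l => by rw [← h]; rfl
  have hzero : ∀ k l, k ≠ t → P k l = 0 := fun k l hk =>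
    hP.apply_eq_zero_of_add_eq_zero hPs hQ hQs (by simp [hent, hk.symm]) (by simp [hent, hk.symm])
  ext k l
  rcases eq_or_ne k t with rfl | hk
  · rcases eq_or_ne l k with rfl | hl
    · simp
    · rw [← hPs.apply, hzero l k hl]
      simp [hl.symm]
  · simp [hzero k l hk, hk.symm]

end Copositive

lemma copositive_sq_smul_single_add_iff {i j : m} (hij : i ≠ j) {a b : ℝ} (ha : 0 < a)
    (hb : 0 < b) (s : ℝ) :
    Copositive (a ^ 2 • single i i 1 + b ^ 2 • single j j 1 + s • (single i j 1 + single j i 1))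
      ↔ -(a * b) ≤ s := by
  have hQ : ∀ u : m → ℝ, u ⬝ᵥ (a ^ 2 • single i i 1 + b ^ 2 • single j j 1
      + s • (single i j 1 + single j i 1)) *ᵥ u
      = (a * u i - b * u j) ^ 2 + 2 * (a * b + s) * (u i * u j) := by
    intro u
    rw [dotProduct_smul_single_add_mulVec]
    simp only [add_mulVec, dotProduct_add, dotProduct_single_mulVec]
    ring
  constructor
  · intro hA
    have := hA (Pi.single i b + Pi.single j a) (single_add_single_nonneg hb.le ha.le)
    rw [hQ] at this
    simp [hij, hij.symm] at this
    nlinarith [mul_pos ha hb]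
  · intro hs u hu
    rw [hQ]
    nlinarith [mul_nonneg (hu i) (hu j), sq_nonneg (a * u i - b * u j)]

lemma Matrix.IsSymm.apply_eq_zero_of_dotProduct_mulVec_eq_zero {B : Matrix m m ℝ}
    (hB : B.IsSymm) {p : m} (h : ∀ u : m → ℝ, (∀ x, 0 ≤ u x) → u p = 0 → u ⬝ᵥ B *ᵥ u = 0)
    {k l : m} (hk : k ≠ p) (hl : l ≠ p) : B k l = 0 := by
  have hQ : ∀ a b : ℝ, 0 ≤ a → 0 ≤ b →
      a * B k k * a + a * B k l * b + b * B l k * a + b * B l l * b = 0 := by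
    intro a b ha hb
    have := h (Pi.single k a + Pi.single l b) (single_add_single_nonneg ha hb)
      (by simp [hk.symm, hl.symm])
    simp only [mulVec_add, dotProduct_add, add_dotProduct, single_dotProduct_mulVec_single] at this
    linarith
  have h10 := hQ 1 0 zero_le_one le_rfl
  have h01 := hQ 0 1 le_rfl zero_le_one
  have h11 := hQ 1 1 zero_le_one zero_le_one
  rw [hB.apply k l] at h11
  linarith

lemma eq_single_add_single_of_copositive_iff {i j : m} (hij : i ≠ j) {B : Matrix m m ℝ}
    (hBs : B.IsSymm) (hB : Copositive B)
    (hcrit : ∀ a b : ℝ, 0 < a → 0 < b → ∀ s : ℝ,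
      Copositive (a ^ 2 • single i i 1 + b ^ 2 • single j j 1 + s • B) ↔ -(a * b) ≤ s) :
    B = single i j 1 + single j i 1 := by
  have hbound : ∀ a b : ℝ, 0 < a → 0 < b → ∀ u : m → ℝ, (∀ x, 0 ≤ u x) →
      a * b * (u ⬝ᵥ B *ᵥ u) ≤ a ^ 2 * (u i * u i) + b ^ 2 * (u j * u j) := by
    intro a b ha hb u hu
    have := (hcrit a b ha hb (-(a * b))).2 le_rfl u hu
    rw [dotProduct_smul_single_add_mulVec] at this
    linarith
  have hvanish_i : ∀ u : m → ℝ, (∀ x, 0 ≤ u x) → u i = 0 → u ⬝ᵥ B *ᵥ u = 0 := by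
    intro u hu hui
    refine le_antisymm (nonpos_of_forall_pos_le_mul (mul_self_nonneg (u j)) fun c hc => ?_)
      (hB u hu)
    have := hbound 1 c one_pos hc u hu
    rw [hui] at this
    nlinarith
  have hvanish_j : ∀ u : m → ℝ, (∀ x, 0 ≤ u x) → u j = 0 → u ⬝ᵥ B *ᵥ u = 0 := by
    intro u hu huj
    refine le_antisymm (nonpos_of_forall_pos_le_mul (mul_self_nonneg (u i)) fun c hc => ?_)
      (hB u hu)
    have := hbound c 1 hc one_pos u hu
    rw [huj] at this
    nlinarith
  have hform : B = B i j • (single i j 1 + single j i 1) := by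
    ext k l
    by_cases hkl : k = i ∧ l = j
    · obtain ⟨rfl, rfl⟩ := hkl
      simp [hij.symm]
    by_cases hlk : k = j ∧ l = i
    · obtain ⟨rfl, rfl⟩ := hlk
      simp [hij, hBs.apply k l]
    have hzero : (k ≠ i ∧ l ≠ i) ∨ (k ≠ j ∧ l ≠ j) := by grind
    rcases hzero with ⟨hk, hl⟩ | ⟨hk, hl⟩
    · rw [hBs.apply_eq_zero_of_dotProduct_mulVec_eq_zero hvanish_i hk hl]
      simp [Ne.symm hk, Ne.symm hl]
    · rw [hBs.apply_eq_zero_of_dotProduct_mulVec_eq_zero hvanish_j hk hl]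
      simp [Ne.symm hk, Ne.symm hl]
  have hone : B i j = 1 := by
    refine eq_one_of_forall_neg_one_le_mul_iff fun s => ?_
    have := hcrit 1 1 one_pos one_pos s
    rw [hform, smul_smul, copositive_sq_smul_single_add_iff hij one_pos one_pos] at this
    simpa using this
  rw [hform, hone, one_smul]

end Copositive

namespace Sn

variable {n : ℕ}

def diagUnit (t : Fin n) : Sn n := ⟨single t t 1, transpose_single t t 1⟩

def offDiagUnit (i j : Fin n) : Sn n :=
  ⟨single i j 1 + single j i 1, show (single i j 1 + single j i 1)ᵀ = _ by
    rw [transpose_add, transpose_single, transpose_single, add_comm]⟩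

lemma offDiagUnit_self (i : Fin n) : offDiagUnit i i = (2 : ℝ) • diagUnit i :=
  Subtype.ext (two_smul ℝ _).symm

lemma eq_sum_smul_offDiagUnit (x : Sn n) : x = ∑ i, ∑ j, (x.1 i j / 2) • offDiagUnit i j := by
  ext k l
  simp only [offDiagUnit, AddSubmonoidClass.coe_finsetSum, SetLike.val_smul, smul_add,
    smul_single, smul_eq_mul, mul_one, Finset.sum_add_distrib, Matrix.sum_apply,
    Matrix.add_apply, single_apply, ite_and, Finset.sum_ite_irrel, Finset.sum_ite_eq',
    Finset.mem_univ, if_true, Finset.sum_const_zero]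
  rw [IsSymm.apply x.2 k l]
  ring

lemma linearMap_ext {M : Type*} [AddCommMonoid M] [Module ℝ M] {f g : Sn n →ₗ[ℝ] M}
    (h : ∀ i j, f (offDiagUnit i j) = g (offDiagUnit i j)) : f = g :=
  LinearMap.ext fun x => by
    rw [eq_sum_smul_offDiagUnit x]
    simp only [map_sum, map_smul, h]

lemma exists_sub_eq (x : Sn n) : ∃ p ∈ Cn n, ∃ q ∈ Cn n, p - q = x :=
  ⟨⟨x.1.map (·⁺), IsSymm.map x.2 _⟩, copositive_of_nonneg fun _ _ => posPart_nonneg _,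
    ⟨x.1.map (·⁻), IsSymm.map x.2 _⟩, copositive_of_nonneg fun _ _ => negPart_nonneg _,
    Subtype.ext <| Matrix.ext fun _ _ => posPart_sub_negPart _⟩

lemma bijective_of_image_Cn_eq {ψ : Sn n →ₗ[ℝ] Sn n} (hψ : ψ '' Cn n = Cn n) :
    Function.Bijective ψ := by
  have hsurj : Function.Surjective ψ := by
    intro x
    obtain ⟨p, hp, q, hq, rfl⟩ := exists_sub_eq x
    rw [← hψ] at hp hq
    obtain ⟨p', -, rfl⟩ := hp
    obtain ⟨q', -, rfl⟩ := hq
    exact ⟨p' - q', map_sub ψ p' q'⟩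
  exact ⟨LinearMap.injective_iff_surjective.2 hsurj, hsurj⟩

end Sn

open Sn

section ConeAutomorphism

variable {n : ℕ} {ψ : Sn n ≃ₗ[ℝ] Sn n}

lemma map_diagUnit_eq_of_exists_mem_Tn (hC : ∀ a, ψ a ∈ Cn n ↔ a ∈ Cn n) {t : Fin n}
    (hb : ∃ b ∈ Tn n, (ψ (diagUnit t)).1 = (diagUnit t).1 + b.1) :
    ψ (diagUnit t) = diagUnit t := by
  obtain ⟨b, ⟨hb_nonneg, hb_diag⟩, hψe⟩ := hb
  set e := diagUnit t
  replace hψe : ψ e = e + b := Subtype.ext hψe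
  have hmem_Cn : ∀ a, a ∈ Cn n → ψ.symm a ∈ Cn n := fun a ha =>
    (hC _).1 (by rwa [ψ.apply_symm_apply])
  have he : e ∈ Cn n := copositive_of_nonneg fun k l => by
    simp only [e, diagUnit, single_apply]
    split_ifs <;> norm_num
  have hsum : ψ.symm e + ψ.symm b = e := by rw [← map_add, ← hψe, ψ.symm_apply_apply]
  have hp : ψ.symm e = (ψ.symm e).1 t t • e := Subtype.ext <|
    Copositive.eq_smul_single_of_add_eq_single (hmem_Cn e he) (ψ.symm e).2
      (hmem_Cn b (copositive_of_nonneg hb_nonneg)) (ψ.symm b).2 (congrArg Subtype.val hsum)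
  have hce : (ψ.symm e).1 t t • (e + b) = e := by
    rw [← hψe, ← map_smul, ← hp, ψ.apply_symm_apply]
  have hc : (ψ.symm e).1 t t = 1 := by
    simpa [e, diagUnit, hb_diag] using congrArg (fun z : Sn n => z.1 t t) hce
  rw [hψe, ← one_smul ℝ (e + b), ← hc, hce]

lemma map_offDiagUnit_eq (hC : ∀ a, ψ a ∈ Cn n ↔ a ∈ Cn n)
    (hdiag : ∀ t, ψ (diagUnit t) = diagUnit t) (i j : Fin n) :
    ψ (offDiagUnit i j) = offDiagUnit i j := by
  rcases eq_or_ne i j with rfl | hij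
  · rw [offDiagUnit_self, map_smul, hdiag]
  have hcrit : ∀ a b : ℝ, 0 < a → 0 < b → ∀ s : ℝ, Copositive (a ^ 2 • single i i 1
      + b ^ 2 • single j j 1 + s • (ψ (offDiagUnit i j)).1) ↔ -(a * b) ≤ s := by
    intro a b ha hb s
    rw [← copositive_sq_smul_single_add_iff hij ha hb s]
    have := hC (a ^ 2 • diagUnit i + b ^ 2 • diagUnit j + s • offDiagUnit i j)
    rwa [map_add, map_add, map_smul, map_smul, map_smul, hdiag, hdiag] at this
  have hf : offDiagUnit i j ∈ Cn n := copositive_of_nonneg fun k l => by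
    simp only [offDiagUnit, Matrix.add_apply, single_apply]
    split_ifs <;> norm_num
  exact Subtype.ext <| eq_single_add_single_of_copositive_iff hij (ψ _).2 ((hC _).2 hf) hcrit

end ConeAutomorphism

/-- If ψ preserves C_n and ψ(e_{tt}) = e_{tt} + b_t with b_t ∈ T_n for all t, then ψ = id. -/
theorem stmt_17 (n : ℕ) (ψ : Sn n →ₗ[ℝ] Sn n) (hψ : ψ '' Cn n = Cn n)
    (h : ∀ (t : Fin n) (e : Sn n), e.1 = Matrix.single t t 1 →
      ∃ b ∈ Tn n, (ψ e).1 = e.1 + b.1) :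
    ∀ x : Sn n, ψ x = x := by
  have hbij := bijective_of_image_Cn_eq hψ
  let Φ := LinearEquiv.ofBijective ψ hbij
  have hC : ∀ a, Φ a ∈ Cn n ↔ a ∈ Cn n := fun a => by
    have := hbij.1.mem_set_image (s := Cn n) (a := a)
    rwa [hψ] at this
  have hdiag : ∀ t, Φ (diagUnit t) = diagUnit t := fun t =>
    map_diagUnit_eq_of_exists_mem_Tn hC (h t _ rfl)
  have hid : Φ.toLinearMap = LinearMap.id := linearMap_ext (map_offDiagUnit_eq hC hdiag)
  exact fun x => LinearMap.congr_fun hid x
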